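/- Nontermination Is Sequential (environment semantics): for a program P, there exists a value v with P:[] ⇓ v if and only if there is no infinite call chain P:[] = e₀:ρ₀ → e₁:ρ₁ → e₂:ρ₂ → … in the environment-based call relation. -/

import Mathlib

/- Untyped λ-expressions. -/
inductive Exp : Type
  | var : String → Exp
  | app : Exp → Exp → Exp
  | lam : String → Exp → Exp
deriving DecidableEq

namespace Exp

/-- Free variables. -/
def fv : Exp → Finset String
  | var x => {x}
  | app e1 e2 => fv e1 ∪ fv e2
  | lam x e => fv e \ {x}

/-- The set of subexpressions of a λ-expression. -/
def subexp : Exp → Set Exp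
  | var x => {var x}
  | app e1 e2 => insert (app e1 e2) (subexp e1 ∪ subexp e2)
  | lam x e => insert (lam x e) (subexp e)

end Exp

/- Values (closures), environments and states of the environment-based
semantics.  An environment is a (partial) map from variable names to values;
a state `e:ρ` pairs an expression with an environment. -/
inductive Val : Type
  | clos : String → Exp → (String → Option Val) → Val

abbrev Env := String → Option Val
abbrev State := Exp × Env

/-- A value `λx.e:ρ` viewed as a state. -/
def Val.toState : Val → State
  | .clos x e ρ => (Exp.lam x e, ρ)

/-- The λ-expression component of a value. -/
def Val.toExp : Val → Exp
  | .clos x e _ => Exp.lam x e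

def Env.update (ρ : Env) (x : String) (v : Val) : Env :=
  fun y => if y = x then some v else ρ y

def Env.empty : Env := fun _ => none
/- Environment-based evaluation `s ⇓ v` and the call relations
`→r` (Operator), `→d` (Operand), `→c` (Call); (Apply) evaluates an
application via its `→c` call. -/
mutual
  inductive EvalE : State → Val → Prop
    | value (x : String) (e : Exp) (ρ : Env) :
        EvalE (Exp.lam x e, ρ) (Val.clos x e ρ)
    | var {ρ : Env} {x : String} {v : Val} :
        ρ x = some v → EvalE (Exp.var x, ρ) v
    | apply {s s' : State} {v : Val} :
        CallC s s' → EvalE s' v → EvalE s v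
  inductive CallC : State → State → Prop
    | call {e1 e2 : Exp} {ρ ρ0 : Env} {x : String} {e0 : Exp} {v2 : Val} :
        EvalE (e1, ρ) (Val.clos x e0 ρ0) → EvalE (e2, ρ) v2 →
        CallC (Exp.app e1 e2, ρ) (e0, Env.update ρ0 x v2)
end

inductive CallR : State → State → Prop
  | oper (e1 e2 : Exp) (ρ : Env) : CallR (Exp.app e1 e2, ρ) (e1, ρ)

inductive CallD : State → State → Prop
  | opnd {e1 : Exp} {ρ : Env} {v1 : Val} (e2 : Exp) :
      EvalE (e1, ρ) v1 → CallD (Exp.app e1 e2, ρ) (e2, ρ)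

/-- The call relation `→` on states is `→r ∪ →d ∪ →c`. -/
def Call (s s' : State) : Prop := CallR s s' ∨ CallD s s' ∨ CallC s s'

/-!
An evaluation derivation of `s` bounds every call chain from `s`: the `→r` and `→d` successors
of an application are evaluated by subderivations, and since evaluation is deterministic its only
`→c` successor is the one the derivation uses. So `s ⇓ v` makes `s` accessible for the converse
of `→`, which is the same as having no infinite call chain. Conversely, induction on
accessibility evaluates any state whose environment hereditarily covers its free variables; this
invariant is preserved by evaluation and by calls, and holds for `P:[]` when `P` is closed.
-/

mutual
theorem EvalE.unique {s : State} {v v' : Val} : EvalE s v → EvalE s v' → v = v'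
  | .value .., .value .. => rfl
  | .var h, .var h' => Option.some.inj (h.symm.trans h')
  | .apply hc he, .apply hc' he' => by
    cases CallC.unique hc hc'
    exact EvalE.unique he he'
  | .value .., .apply hc _ | .var _, .apply hc _ | .apply hc _, .value .. | .apply hc _, .var _ =>
    nomatch hc

theorem CallC.unique {s t t' : State} : CallC s t → CallC s t' → t = t'
  | .call h₁ h₂, .call h₁' h₂' => by
    cases EvalE.unique h₁ h₁'
    cases EvalE.unique h₂ h₂'
    rfl
end

theorem not_call_lam {x : String} {e : Exp} {ρ : Env} {t : State} : ¬ Call (.lam x e, ρ) t := by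
  rintro (h | h | h) <;> cases h

theorem not_call_var {x : String} {ρ : Env} {t : State} : ¬ Call (.var x, ρ) t := by
  rintro (h | h | h) <;> cases h

mutual
theorem EvalE.acc {s : State} {v : Val} : EvalE s v → Acc (flip Call) s
  | .value .. => ⟨_, fun _ h => absurd h not_call_lam⟩
  | .var _ => ⟨_, fun _ h => absurd h not_call_var⟩
  | .apply hc he => CallC.acc_of_acc hc (EvalE.acc he)

theorem CallC.acc_of_acc {s t : State} : CallC s t → Acc (flip Call) t → Acc (flip Call) s
  | .call h₁ h₂, ht => ⟨_, fun
    | _, .inl (.oper ..) => EvalE.acc h₁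
    | _, .inr (.inl (.opnd _ _)) => EvalE.acc h₂
    | _, .inr (.inr hc) => CallC.unique (.call h₁ h₂) hc ▸ ht⟩
end

inductive Val.WellScoped : Val → Prop
  | clos {x : String} {e : Exp} {ρ : Env} :
      (∀ y ∈ (Exp.lam x e).fv, (ρ y).isSome) → (∀ y v, ρ y = some v → Val.WellScoped v) →
      Val.WellScoped (.clos x e ρ)

def WellScoped (s : State) : Prop :=
  (∀ y ∈ s.1.fv, (s.2 y).isSome) ∧ ∀ y v, s.2 y = some v → v.WellScoped

namespace WellScoped

theorem app_left {e₁ e₂ : Exp} {ρ : Env} (h : WellScoped (.app e₁ e₂, ρ)) : WellScoped (e₁, ρ) :=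
  ⟨fun y hy => h.1 y (Finset.mem_union_left _ hy), h.2⟩

theorem app_right {e₁ e₂ : Exp} {ρ : Env} (h : WellScoped (.app e₁ e₂, ρ)) : WellScoped (e₂, ρ) :=
  ⟨fun y hy => h.1 y (Finset.mem_union_right _ hy), h.2⟩

theorem of_clos {x : String} {e : Exp} {ρ : Env} {v : Val} (hf : (Val.clos x e ρ).WellScoped)
    (hv : v.WellScoped) : WellScoped (e, ρ.update x v) := by
  obtain ⟨hcov, hvals⟩ := hf
  constructor
  · intro y hy
    by_cases hyx : y = x
    · simp [Env.update, hyx]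
    · simpa [Env.update, hyx] using hcov y (by simp [Exp.fv, hy, hyx])
  · intro y w hw
    by_cases hyx : y = x
    · simp only [Env.update, hyx, if_true, Option.some.injEq] at hw
      exact hw ▸ hv
    · simp only [Env.update, hyx, if_false] at hw
      exact hvals y w hw

theorem of_closed {P : Exp} (hP : P.fv = ∅) : WellScoped (P, Env.empty) :=
  ⟨by simp [hP], fun _ _ h => nomatch h⟩

end WellScoped

mutual
theorem EvalE.wellScoped {s : State} {v : Val} : EvalE s v → WellScoped s → v.WellScoped
  | .value .., hs => .clos hs.1 hs.2
  | .var hx, hs => hs.2 _ _ hx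
  | .apply hc he, hs => EvalE.wellScoped he (CallC.wellScoped hc hs)

theorem CallC.wellScoped {s t : State} : CallC s t → WellScoped s → WellScoped t
  | .call h₁ h₂, hs =>
    .of_clos (EvalE.wellScoped h₁ hs.app_left) (EvalE.wellScoped h₂ hs.app_right)
end

theorem WellScoped.exists_evalE_of_acc {s : State} (hacc : Acc (flip Call) s)
    (hs : WellScoped s) : ∃ v, EvalE s v := by
  induction hacc with
  | intro s _ ih =>
    obtain ⟨e, ρ⟩ := s
    cases e with
    | var x => exact (Option.isSome_iff_exists.mp (hs.1 x (by simp [Exp.fv]))).imp fun _ => .var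
    | lam x e => exact ⟨_, .value x e ρ⟩
    | app e₁ e₂ =>
      obtain ⟨⟨x, e₀, ρ₀⟩, h₁⟩ := ih _ (.inl (.oper e₁ e₂ ρ)) hs.app_left
      obtain ⟨v₂, h₂⟩ := ih _ (.inr (.inl (.opnd e₂ h₁))) hs.app_right
      have hc : CallC (.app e₁ e₂, ρ) (e₀, Env.update ρ₀ x v₂) := .call h₁ h₂
      obtain ⟨v, hv⟩ := ih _ (.inr (.inr hc)) (hc.wellScoped hs)
      exact ⟨v, .apply hc hv⟩

/-- NIS (Nontermination Is Sequential), environment semantics: a program `P`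
evaluates (from the empty environment) to some value iff there is no infinite
call chain starting at `P:[]`. -/
theorem nontermination_is_sequential_env (P : Exp) (hP : P.fv = ∅) :
    (∃ v, EvalE (P, Env.empty) v) ↔
      ¬ ∃ f : ℕ → State, f 0 = (P, Env.empty) ∧ ∀ n, Call (f n) (f (n + 1)) := by
  have evaluates_iff_acc : (∃ v, EvalE (P, Env.empty) v) ↔ Acc (flip Call) (P, Env.empty) :=
    ⟨fun ⟨_, hv⟩ => hv.acc, fun hacc => (WellScoped.of_closed hP).exists_evalE_of_acc hacc⟩
  exact evaluates_iff_acc.trans not_acc_iff_exists_descending_chain.not_right
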